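/- arXiv:2504.09760 — 9 statements merged into one kernel-verified Lean document; each statement's English description precedes it below -/
import Mathlib

section
/- Let h : ℝⁿ → ℝ be continuously differentiable and let α : ℝ → ℝ be an extended class-K∞ function that is locally Lipschitz continuous. Let φ : ℝ_{≥0} → ℝⁿ be a continuously differentiable curve such that ⟨∇h(φ(t)), φ'(t)⟩ ≥ −α(h(φ(t))) for all t ≥ 0 and h(φ(0)) ≥ 0. Then h(φ(t)) ≥ 0 for all t ≥ 0; i.e., the 0-superlevel set C = {x ∈ ℝⁿ : h(x) ≥ 0} is forward invariant along φ. -/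
open scoped RealInnerProductSpace

open Set

/-
While `h ∘ φ` is negative, `α (h ∘ φ) < 0`, so the differential inequality forces
`(h ∘ φ)' > 0`. Were `h (φ t) < 0`, on the interval from the last time `s ≤ t` with
`h (φ s) ≥ 0` up to `t` the function `h ∘ φ` would be monotone, giving
`0 ≤ h (φ s) ≤ h (φ t) < 0`.
-/

theorem HasGradientAt.comp_hasDerivAt {F : Type*} [NormedAddCommGroup F]
    [InnerProductSpace ℝ F] [CompleteSpace F] {f : F → ℝ} {g : F} {φ : ℝ → F} {v : F} {t : ℝ}
    (hf : HasGradientAt f g (φ t)) (hφ : HasDerivAt φ v t) :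
    HasDerivAt (f ∘ φ) ⟪g, v⟫ t :=
  hf.hasFDerivAt.comp_hasDerivAt t hφ

theorem exists_nonneg_forall_Ioc_neg {y : ℝ → ℝ} {a b : ℝ} (hab : a ≤ b)
    (hy : ContinuousOn y (Icc a b)) (ha : 0 ≤ y a) :
    ∃ s ∈ Icc a b, 0 ≤ y s ∧ ∀ u ∈ Ioc s b, y u < 0 := by
  have hclosed : IsClosed (Icc a b ∩ y ⁻¹' Ici 0) :=
    hy.preimage_isClosed_of_isClosed isClosed_Icc isClosed_Ici
  obtain ⟨s, ⟨hs, hys⟩, hmax⟩ :=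
    (isCompact_Icc.of_isClosed_subset hclosed inter_subset_left).exists_isGreatest
      ⟨a, ⟨left_mem_Icc.mpr hab, ha⟩⟩
  refine ⟨s, hs, hys, fun u hu => ?_⟩
  by_contra! hyu
  exact (hmax ⟨⟨hs.1.trans hu.1.le, hu.2⟩, hyu⟩).not_gt hu.1

theorem nonneg_of_hasDerivAt_of_neg_imp_deriv_nonneg {y y' : ℝ → ℝ} {a : ℝ}
    (hy : ∀ t, a ≤ t → HasDerivAt y (y' t) t)
    (hy' : ∀ t, a ≤ t → y t < 0 → 0 ≤ y' t) (ha : 0 ≤ y a) :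
    ∀ t, a ≤ t → 0 ≤ y t := by
  intro t hat
  by_contra! hyt
  have hcont : ContinuousOn y (Icc a t) := fun u hu => (hy u hu.1).continuousAt.continuousWithinAt
  obtain ⟨s, ⟨has, hst⟩, hys, hneg⟩ := exists_nonneg_forall_Ioc_neg hat hcont ha
  have hmono : MonotoneOn y (Icc s t) := by
    refine monotoneOn_of_deriv_nonneg (convex_Icc s t) (hcont.mono (Icc_subset_Icc_left has))
      ?_ ?_ <;> rw [interior_Icc] <;> intro u hu
    · exact (hy u (has.trans hu.1.le)).differentiableAt.differentiableWithinAt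
    · rw [(hy u (has.trans hu.1.le)).deriv]
      exact hy' u (has.trans hu.1.le) (hneg u ⟨hu.1, hu.2.le⟩)
  have := hmono ⟨le_rfl, hst⟩ ⟨hst, le_rfl⟩ hst
  linarith

theorem stmt_2_general {n : ℕ}
    (h : EuclideanSpace ℝ (Fin n) → ℝ)
    (hh : ContDiff ℝ 1 h)
    (α : ℝ → ℝ)
    (hαmono : StrictMono α)
    (hα0 : α 0 = 0)
    (φ φ' : ℝ → EuclideanSpace ℝ (Fin n))
    (hφ : ∀ t : ℝ, 0 ≤ t → HasDerivAt φ (φ' t) t)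
    (hineq : ∀ t : ℝ, 0 ≤ t → ⟪gradient h (φ t), φ' t⟫ ≥ -α (h (φ t)))
    (h0 : h (φ 0) ≥ 0) :
    ∀ t : ℝ, 0 ≤ t → h (φ t) ≥ 0 := by
  refine nonneg_of_hasDerivAt_of_neg_imp_deriv_nonneg (y := h ∘ φ)
    (fun t ht => ((hh.differentiable one_ne_zero _).hasGradientAt).comp_hasDerivAt (hφ t ht))
    (fun t ht hneg => ?_) h0
  have : α (h (φ t)) < 0 := hα0 ▸ hαmono hneg
  linarith [hineq t ht]

/-- forward invariance of the 0-superlevel set of `h` along a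
continuously differentiable curve satisfying the zeroing CBF differential
inequality `⟪∇h(φ(t)), φ'(t)⟫ ≥ -α(h(φ(t)))` with a locally Lipschitz extended
class-K∞ function `α`. -/
theorem stmt_2 {n : ℕ}
    (h : EuclideanSpace ℝ (Fin n) → ℝ)
    (hh : ContDiff ℝ 1 h)
    (α : ℝ → ℝ)
    (hαcont : Continuous α)
    (hαmono : StrictMono α)
    (hα0 : α 0 = 0)
    (hαtop : Filter.Tendsto α Filter.atTop Filter.atTop)
    (hαbot : Filter.Tendsto α Filter.atBot Filter.atBot)
    (hαlip : LocallyLipschitz α)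
    (φ φ' : ℝ → EuclideanSpace ℝ (Fin n))
    (hφ : ∀ t : ℝ, 0 ≤ t → HasDerivAt φ (φ' t) t)
    (hφ'cont : ContinuousOn φ' (Set.Ici 0))
    (hineq : ∀ t : ℝ, 0 ≤ t → ⟪gradient h (φ t), φ' t⟫ ≥ -α (h (φ t)))
    (h0 : h (φ 0) ≥ 0) :
    ∀ t : ℝ, 0 ≤ t → h (φ t) ≥ 0 :=
  stmt_2_general h hh α hαmono hα0 φ φ' hφ hineq h0
end

section
/- Let a, c ∈ ℝᵐ be nonzero vectors such that there is no λ > 0 with a = λc. Then for every b, d ∈ ℝ there exists u ∈ ℝᵐ with ⟨a, u⟩ ≤ b and ⟨c, u⟩ ≥ d. -/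
/-!
Unless `a` and `c` point the same way, Cauchy–Schwarz is strict, `⟪a, c⟫ < ‖a‖ ‖c‖`, and then
`v = ‖a‖ • c - ‖c‖ • a` satisfies `⟪a, v⟫ < 0 < ⟪c, v⟫`. Moving far enough along `v` drives
`⟪a, u⟫` to `-∞` and `⟪c, u⟫` to `+∞` at the same time.
-/

open scoped RealInnerProductSpace
open Filter

section

variable {E : Type*} [NormedAddCommGroup E] [InnerProductSpace ℝ E]

theorem real_inner_lt_norm_mul_norm_of_not_exists_pos_smul {a c : E} (ha : a ≠ 0) (hc : c ≠ 0)
    (hnp : ¬ ∃ l : ℝ, 0 < l ∧ a = l • c) : ⟪a, c⟫ < ‖a‖ * ‖c‖ := by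
  refine inner_lt_norm_mul_iff_real.mpr fun h => hnp ⟨‖a‖ / ‖c‖, by positivity, ?_⟩
  rw [div_eq_inv_mul, mul_smul, ← h, smul_smul, inv_mul_cancel₀ (norm_ne_zero_iff.mpr hc),
    one_smul]

theorem exists_real_inner_neg_and_pos_of_lt_norm_mul_norm {a c : E}
    (h : ⟪a, c⟫ < ‖a‖ * ‖c‖) : ∃ v : E, ⟪a, v⟫ < 0 ∧ 0 < ⟪c, v⟫ := by
  have hac : 0 < ‖a‖ * ‖c‖ := by
    linarith [neg_le_of_abs_le (abs_real_inner_le_norm a c)]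
  have ha : 0 < ‖a‖ := (norm_nonneg a).lt_of_ne fun h0 => by simp [← h0] at hac
  have hc : 0 < ‖c‖ := (norm_nonneg c).lt_of_ne fun h0 => by simp [← h0] at hac
  refine ⟨‖a‖ • c - ‖c‖ • a, ?_, ?_⟩
  · have : ⟪a, ‖a‖ • c - ‖c‖ • a⟫ = ‖a‖ * (⟪a, c⟫ - ‖a‖ * ‖c‖) := by
      rw [inner_sub_right, real_inner_smul_right, real_inner_smul_right,
        real_inner_self_eq_norm_sq]
      ring
    rw [this]
    exact mul_neg_of_pos_of_neg ha (sub_neg.mpr h)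
  · have : ⟪c, ‖a‖ • c - ‖c‖ • a⟫ = ‖c‖ * (‖a‖ * ‖c‖ - ⟪a, c⟫) := by
      rw [inner_sub_right, real_inner_smul_right, real_inner_smul_right,
        real_inner_self_eq_norm_sq, real_inner_comm]
      ring
    rw [this]
    exact mul_pos hc (sub_pos.mpr h)

theorem exists_real_inner_le_and_ge_of_real_inner_neg_and_pos {a c v : E}
    (hav : ⟪a, v⟫ < 0) (hcv : 0 < ⟪c, v⟫) (b d : ℝ) :
    ∃ u : E, ⟪a, u⟫ ≤ b ∧ ⟪c, u⟫ ≥ d := by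
  have hbelow : ∀ᶠ t : ℝ in atTop, t * ⟪a, v⟫ ≤ b :=
    (tendsto_id.atTop_mul_const_of_neg hav).eventually_le_atBot b
  have habove : ∀ᶠ t : ℝ in atTop, d ≤ t * ⟪c, v⟫ :=
    (tendsto_id.atTop_mul_const hcv).eventually_ge_atTop d
  obtain ⟨t, htb, htd⟩ := (hbelow.and habove).exists
  exact ⟨t • v, by rwa [real_inner_smul_right], by rwa [real_inner_smul_right]⟩

end

/-- two half-space constraints `⟪a,u⟫ ≤ b` and `⟪c,u⟫ ≥ d` on the
control input always intersect unless the nonzero direction vectors `a` and `c`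
are positively parallel. -/
theorem stmt_9 {m : ℕ}
    (a c : EuclideanSpace ℝ (Fin m))
    (ha : a ≠ 0) (hc : c ≠ 0)
    (hnp : ¬ ∃ l : ℝ, 0 < l ∧ a = l • c) :
    ∀ b d : ℝ, ∃ u : EuclideanSpace ℝ (Fin m), ⟪a, u⟫ ≤ b ∧ ⟪c, u⟫ ≥ d := by
  obtain ⟨v, hav, hcv⟩ := exists_real_inner_neg_and_pos_of_lt_norm_mul_norm
    (real_inner_lt_norm_mul_norm_of_not_exists_pos_smul ha hc hnp)
  exact exists_real_inner_le_and_ge_of_real_inner_neg_and_pos hav hcv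
end

section
/- Let q ∈ ℝⁿ be a vector, λ > 0, p = λq, let A be a real n×m matrix with Aᵀq ≠ 0, and let f ∈ ℝⁿ and Γ, Α ∈ ℝ. Then there exists u ∈ ℝᵐ satisfying both ⟨p, f + Au⟩ ≤ −Γ and ⟨q, f + Au⟩ ≥ −Α if and only if Α ≥ λ⁻¹Γ. In particular, with p = ∇V(x), q = ∇h(x), A = G(x), Γ = γ(V(x)), and Α = α(h(x)), when x lies in the critical set (∇V(x) = λ∇h(x), λ > 0) the CLF constraint ⟨∇V(x), f(x)+G(x)u⟩ ≤ −γ(V(x)) and the CBF constraint ⟨∇h(x), f(x)+G(x)u⟩ ≥ −α(h(x)) are jointly satisfiable if and only if α(h(x)) ≥ λ⁻¹γ(V(x)) = (‖∇h(x)‖/‖∇V(x)‖)·γ(V(x)). -/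
/-!
Since `p = λ q`, both constraints are conditions on the single scalar `s = ⟪q, f + A u⟫`,
which takes every real value because `A† q ≠ 0`. The conditions `λ s ≤ -Γ` and `s ≥ -Α`
are compatible exactly when `-Α ≤ -Γ / λ`.
-/

open scoped RealInnerProductSpace

section

variable {E F : Type*} [NormedAddCommGroup E] [InnerProductSpace ℝ E] [CompleteSpace E]
  [NormedAddCommGroup F] [InnerProductSpace ℝ F] [CompleteSpace F]

/-- Moving `u` along `A† q` moves `⟪q, f + A u⟫` at the nonzero rate `‖A† q‖²`. -/
theorem surjective_inner_add_apply {q : F} {A : E →L[ℝ] F} (hA : A.adjoint q ≠ 0) (f : F) :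
    Function.Surjective fun u ↦ ⟪q, f + A u⟫ := by
  intro t
  have hv : ‖A.adjoint q‖ ^ 2 ≠ 0 := pow_ne_zero 2 (norm_ne_zero_iff.mpr hA)
  refine ⟨((t - ⟪q, f⟫) / ‖A.adjoint q‖ ^ 2) • A.adjoint q, ?_⟩
  dsimp only
  rw [inner_add_right, map_smul, inner_smul_right, ← ContinuousLinearMap.adjoint_inner_left,
    real_inner_self_eq_norm_sq, div_mul_cancel₀ _ hv, add_sub_cancel]

end

theorem exists_mul_le_neg_and_neg_le_iff {l : ℝ} (hl : 0 < l) (Γ Alph : ℝ) :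
    (∃ s : ℝ, l * s ≤ -Γ ∧ s ≥ -Alph) ↔ Alph ≥ l⁻¹ * Γ := by
  rw [ge_iff_le, inv_mul_le_iff₀ hl]
  constructor
  · rintro ⟨s, hs, hsA⟩
    nlinarith
  · intro h
    exact ⟨-Alph, by linarith, le_rfl⟩

/-- on the critical set where `p = λq` with `λ > 0` and `Aᵀq ≠ 0`,
the CLF constraint `⟪p, f + Au⟫ ≤ -Γ` and the CBF constraint `⟪q, f + Au⟫ ≥ -Α`
are jointly satisfiable iff `Α ≥ λ⁻¹Γ`. -/
theorem stmt_10 {n m : ℕ}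
    (q : EuclideanSpace ℝ (Fin n))
    (l : ℝ) (hl : 0 < l)
    (p : EuclideanSpace ℝ (Fin n)) (hp : p = l • q)
    (A : EuclideanSpace ℝ (Fin m) →L[ℝ] EuclideanSpace ℝ (Fin n))
    (hA : A.adjoint q ≠ 0)
    (f : EuclideanSpace ℝ (Fin n))
    (Γ Alph : ℝ) :
    (∃ u : EuclideanSpace ℝ (Fin m),
        ⟪p, f + A u⟫ ≤ -Γ ∧ ⟪q, f + A u⟫ ≥ -Alph) ↔ Alph ≥ l⁻¹ * Γ := by
  simp only [hp, real_inner_smul_left]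
  exact (surjective_inner_add_apply hA f).exists.symm.trans
    (exists_mul_le_neg_and_neg_le_iff hl Γ Alph)
end

section
/- Let p > 0, a ∈ ℝᵐ, and F_V ∈ ℝ with F_V ≥ 0. Then the pair (u*, δ*) with u* = −(p⁻¹ + ‖a‖²)⁻¹ F_V · a and δ* = p⁻¹(p⁻¹ + ‖a‖²)⁻¹ F_V is the unique minimizer of the strictly convex function (u, δ) ↦ ½(‖u‖² + pδ²) over the set {(u, δ) ∈ ℝᵐ × ℝ : ⟨a, u⟩ ≤ −F_V + δ}. -/
open scoped RealInnerProductSpace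

/-- closed-form KKT solution of the relaxed CLF QP when only the
CLF constraint is present: `u* = -(p⁻¹ + ‖a‖²)⁻¹ F_V a`, `δ* = p⁻¹(p⁻¹ + ‖a‖²)⁻¹ F_V`
is the unique minimizer of `½(‖u‖² + pδ²)` over `{(u,δ) : ⟪a,u⟫ ≤ -F_V + δ}`. -/
theorem stmt_13 {m : ℕ}
    (p : ℝ) (hp : 0 < p)
    (a : EuclideanSpace ℝ (Fin m))
    (FV : ℝ) (hFV : 0 ≤ FV) :
    let uStar : EuclideanSpace ℝ (Fin m) := -(((p⁻¹ + ‖a‖ ^ 2)⁻¹ * FV) • a)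
    let δStar : ℝ := p⁻¹ * ((p⁻¹ + ‖a‖ ^ 2)⁻¹ * FV)
    (⟪a, uStar⟫ ≤ -FV + δStar) ∧
    ∀ (u : EuclideanSpace ℝ (Fin m)) (δ : ℝ), ⟪a, u⟫ ≤ -FV + δ →
      (1 : ℝ) / 2 * (‖uStar‖ ^ 2 + p * δStar ^ 2) ≤
        (1 : ℝ) / 2 * (‖u‖ ^ 2 + p * δ ^ 2) ∧
      ((u, δ) ≠ (uStar, δStar) →
        (1 : ℝ) / 2 * (‖uStar‖ ^ 2 + p * δStar ^ 2) <
          (1 : ℝ) / 2 * (‖u‖ ^ 2 + p * δ ^ 2)) := by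
  intro uStar δStar
  have hq : 0 < p⁻¹ + ‖a‖ ^ 2 := by positivity
  set c : ℝ := (p⁻¹ + ‖a‖ ^ 2)⁻¹ * FV with hc
  have hc0 : 0 ≤ c := by positivity
  have hkey : c * (p⁻¹ + ‖a‖ ^ 2) = FV := by
    rw [hc]; field_simp
  have hkey2 : c * (c * (p⁻¹ + ‖a‖ ^ 2)) = c * FV := by rw [hkey]
  have hinner : ⟪a, uStar⟫ = -(c * ‖a‖ ^ 2) := by
    simp only [uStar, inner_neg_right, real_inner_smul_right,
      real_inner_self_eq_norm_sq]
    try ring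
  have hδ : δStar = p⁻¹ * c := rfl
  have hpδ : p * δStar = c := by
    rw [hδ]; field_simp
  have hcon : ⟪a, uStar⟫ ≤ -FV + δStar := by
    rw [hinner, hδ]; nlinarith [hkey]
  refine ⟨hcon, ?_⟩
  intro u δ hu
  have hexp : ‖u‖ ^ 2 = ‖uStar‖ ^ 2 + 2 * ⟪uStar, u - uStar⟫ + ‖u - uStar‖ ^ 2 := by
    have h := norm_add_sq_real uStar (u - uStar)
    simpa using h
  have hiu : ⟪uStar, u - uStar⟫ = -(c * ⟪a, u⟫ - c * ⟪a, uStar⟫) := by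
    simp only [uStar, inner_neg_left, real_inner_smul_left, inner_sub_right]
    rw [← hc]; ring
  have hslack : 0 ≤ c * δ - c * ⟪a, u⟫ - c * FV := by
    have := mul_nonneg hc0 (by linarith : (0:ℝ) ≤ δ - ⟪a, u⟫ - FV)
    linarith [this]; 
  have hcs : c * ⟪a, uStar⟫ - c * δStar = -(c * FV) := by
    rw [hinner, hδ]; linear_combination -hkey2
  have heq : p * δ ^ 2 - p * δStar ^ 2 - p * (δ - δStar) ^ 2
      = 2 * c * δ - 2 * c * δStar := by
    linear_combination (2 * δ - 2 * δStar) * hpδ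
  have hd0 : 0 ≤ (1:ℝ) / 2 * ‖u - uStar‖ ^ 2 := by positivity
  have hq0 : 0 ≤ p / 2 * (δ - δStar) ^ 2 :=
    mul_nonneg (by linarith) (sq_nonneg _)
  have hmain : (1 : ℝ) / 2 * (‖uStar‖ ^ 2 + p * δStar ^ 2) +
      ((1:ℝ) / 2 * ‖u - uStar‖ ^ 2 + p / 2 * (δ - δStar) ^ 2) ≤
      (1 : ℝ) / 2 * (‖u‖ ^ 2 + p * δ ^ 2) := by
    linarith [hexp, hiu, hslack, hcs, heq]
  constructor
  · linarith
  · intro hne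
    have hpos : 0 < (1:ℝ) / 2 * ‖u - uStar‖ ^ 2 + p / 2 * (δ - δStar) ^ 2 := by
      by_cases hu' : u = uStar
      · have hδne : δ - δStar ≠ 0 := by
          intro h
          exact hne (by rw [hu', sub_eq_zero.mp h])
        have h2 : 0 < (δ - δStar) ^ 2 :=
          lt_of_le_of_ne (sq_nonneg _) (Ne.symm (pow_ne_zero 2 hδne))
        have := mul_pos (by linarith : (0:ℝ) < p / 2) h2
        linarith
      · have hnp : 0 < ‖u - uStar‖ := by
          rw [norm_sub_pos_iff]; exact sub_ne_zero.mpr hu' |> sub_ne_zero.mp |> fun h => hu'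
        have h2 : 0 < ‖u - uStar‖ ^ 2 := pow_pos hnp 2
        linarith
    linarith
end

section
/- Let p > 0, let a, c ∈ ℝᵐ with c ≠ 0, and let F_V, F_h ∈ ℝ satisfy F_h ≤ 0 and ‖c‖²F_V − ⟨a, c⟩F_h < 0. Then the pair (u*, δ*) with u* = −‖c‖⁻² F_h · c and δ* = 0 is the unique minimizer of the strictly convex function (u, δ) ↦ ½(‖u‖² + pδ²) over the set {(u, δ) ∈ ℝᵐ × ℝ : ⟨a, u⟩ ≤ −F_V + δ and ⟨c, u⟩ ≥ −F_h}. -/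
open scoped RealInnerProductSpace

/-!
The point `u* = (t / ‖c‖²) • c` is the orthogonal projection of `0` onto the half-space
`{u | t ≤ ⟪c, u⟫}`; for `t ≥ 0` every `u` in that half-space satisfies
`⟪u*, u - u*⟫ ≥ 0`, hence `‖u‖² ≥ ‖u*‖² + ‖u - u*‖²` by Pythagoras. Taking `δ* = 0` is then
optimal because the condition `s₂ < 0` makes `(u*, 0)` satisfy the CLF constraint, and the
penalty `p δ²` only vanishes at `δ = 0`.
-/

namespace HalfspaceMinNorm

variable {E : Type*} [NormedAddCommGroup E] [InnerProductSpace ℝ E]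

noncomputable def point (c : E) (t : ℝ) : E := ((‖c‖ ^ 2)⁻¹ * t) • c

theorem inner_point_right (x c : E) (t : ℝ) :
    ⟪x, point c t⟫ = (‖c‖ ^ 2)⁻¹ * t * ⟪x, c⟫ :=
  real_inner_smul_right x c _

theorem inner_self_point {c : E} (hc : c ≠ 0) (t : ℝ) : ⟪c, point c t⟫ = t := by
  have : ‖c‖ ^ 2 ≠ 0 := by positivity
  rw [inner_point_right, real_inner_self_eq_norm_sq]
  field_simp

theorem inner_point_sub_nonneg {c x : E} {t : ℝ} (ht : 0 ≤ t) (hx : t ≤ ⟪c, x⟫) :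
    0 ≤ ⟪point c t, x - point c t⟫ := by
  rcases eq_or_ne c 0 with rfl | hc
  · simp [point]
  have hcoef : 0 ≤ (‖c‖ ^ 2)⁻¹ * t := by positivity
  calc 0 ≤ (‖c‖ ^ 2)⁻¹ * t * (⟪c, x⟫ - t) := mul_nonneg hcoef (sub_nonneg.mpr hx)
    _ = ⟪point c t, x - point c t⟫ := by
      have : ‖c‖ ^ 2 ≠ 0 := by positivity
      rw [point, inner_sub_right, real_inner_smul_left, real_inner_smul_left,
        real_inner_smul_right, real_inner_self_eq_norm_sq]
      field_simp

theorem norm_point_sq_add_norm_sub_sq_le {c x : E} {t : ℝ} (ht : 0 ≤ t) (hx : t ≤ ⟪c, x⟫) :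
    ‖point c t‖ ^ 2 + ‖x - point c t‖ ^ 2 ≤ ‖x‖ ^ 2 := by
  have hpyth := norm_add_sq_real (point c t) (x - point c t)
  rw [add_sub_cancel] at hpyth
  nlinarith [inner_point_sub_nonneg ht hx]

end HalfspaceMinNorm

open HalfspaceMinNorm in
/-- closed-form KKT solution of the relaxed CLF-CBF QP when only
the CBF constraint is active: under `F_h ≤ 0` and `s₂ = ‖c‖²F_V - ⟪a,c⟫F_h < 0`,
the pair `u* = -‖c‖⁻² F_h c`, `δ* = 0` is the unique minimizer of
`½(‖u‖² + pδ²)` over `{(u,δ) : ⟪a,u⟫ ≤ -F_V + δ ∧ ⟪c,u⟫ ≥ -F_h}`. -/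
theorem stmt_14 {m : ℕ}
    (p : ℝ) (hp : 0 < p)
    (a c : EuclideanSpace ℝ (Fin m)) (hc : c ≠ 0)
    (FV Fh : ℝ) (hFh : Fh ≤ 0)
    (hs2 : ‖c‖ ^ 2 * FV - ⟪a, c⟫ * Fh < 0) :
    let uStar : EuclideanSpace ℝ (Fin m) := -((‖c‖ ^ 2)⁻¹ * Fh) • c
    let δStar : ℝ := 0
    (⟪a, uStar⟫ ≤ -FV + δStar ∧ ⟪c, uStar⟫ ≥ -Fh) ∧
    ∀ (u : EuclideanSpace ℝ (Fin m)) (δ : ℝ),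
      ⟪a, u⟫ ≤ -FV + δ → ⟪c, u⟫ ≥ -Fh →
      (1 : ℝ) / 2 * (‖uStar‖ ^ 2 + p * δStar ^ 2) ≤
        (1 : ℝ) / 2 * (‖u‖ ^ 2 + p * δ ^ 2) ∧
      ((u, δ) ≠ (uStar, δStar) →
        (1 : ℝ) / 2 * (‖uStar‖ ^ 2 + p * δStar ^ 2) <
          (1 : ℝ) / 2 * (‖u‖ ^ 2 + p * δ ^ 2)) := by
  intro uStar δStar
  have huStar : uStar = point c (-Fh) := by simp only [uStar, point, mul_neg]
  have hc2 : 0 < ‖c‖ ^ 2 := by positivity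
  have hclf : ⟪a, uStar⟫ ≤ -FV := by
    rw [huStar, inner_point_right, ← neg_le_neg_iff, ← mul_le_mul_iff_right₀ hc2]
    field_simp
    linarith
  refine ⟨⟨by simpa [δStar] using hclf, (huStar ▸ (inner_self_point hc _).ge)⟩, ?_⟩
  intro u δ _ hcbf
  have hproj := norm_point_sq_add_norm_sub_sq_le (neg_nonneg.mpr hFh) hcbf
  rw [← huStar] at hproj
  have hpδ : 0 ≤ p * δ ^ 2 := by positivity
  refine ⟨by simp only [δStar]; nlinarith [sq_nonneg ‖u - uStar‖], fun hne => ?_⟩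
  by_cases hδ : δ = 0
  · have hu : u ≠ uStar := fun hu => hne (by rw [hu, hδ])
    have : 0 < ‖u - uStar‖ ^ 2 := pow_pos (norm_pos_iff.mpr (sub_ne_zero.mpr hu)) 2
    simp only [δStar]; nlinarith
  · have : 0 < p * δ ^ 2 := by positivity
    simp only [δStar]; nlinarith [sq_nonneg ‖u - uStar‖]
end

section
/- Let p > 0, let a, c ∈ ℝᵐ with c ≠ 0, and let F_V, F_h ∈ ℝ. Set L = ⟨a, c⟩, Δ = L² − (p⁻¹ + ‖a‖²)‖c‖² (note Δ < 0 by the Cauchy–Schwarz inequality since c ≠ 0 and p⁻¹ > 0), λ₁ = Δ⁻¹(L·F_h − ‖c‖²F_V), and λ₂ = Δ⁻¹((p⁻¹ + ‖a‖²)F_h − L·F_V). If λ₁ ≥ 0 and λ₂ ≥ 0, then the pair (u*, δ*) with u* = −λ₁a + λ₂c and δ* = p⁻¹λ₁ is the unique minimizer of the strictly convex function (u, δ) ↦ ½(‖u‖² + pδ²) over the set {(u, δ) ∈ ℝᵐ × ℝ : ⟨a, u⟩ ≤ −F_V + δ and ⟨c, u⟩ ≥ −F_h}. -/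
/-!
Both constraints are active at `(u*, δ*)`: this is the 2 × 2 linear system whose determinant is
`Δ`, and Cauchy–Schwarz together with `p⁻¹ > 0`, `c ≠ 0` gives `Δ < 0`, so Cramer's rule yields
`λ₁, λ₂`. Since `u* = -λ₁ a + λ₂ c` and `p δ* = λ₁`, the nonnegative multipliers turn feasibility
into the variational inequality `⟪u*, u - u*⟫ + p δ* (δ - δ*) ≥ 0`, and expanding the objective
around `(u*, δ*)` shows that it exceeds its value there by at least `½(‖u - u*‖² + p (δ - δ*)²)`.
-/

open scoped RealInnerProductSpace

variable {E : Type*} [NormedAddCommGroup E]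

lemma norm_sq_sub_add_mul_sq_sub_pos {x y : E} {p s t : ℝ} (hp : 0 < p)
    (hne : (y, t) ≠ (x, s)) : 0 < ‖y - x‖ ^ 2 + p * (t - s) ^ 2 := by
  rcases eq_or_ne y x with rfl | hyx
  · have hts : t - s ≠ 0 := sub_ne_zero.2 fun h => hne (by rw [h])
    simpa using mul_pos hp (sq_pos_of_ne_zero hts)
  · have := norm_pos_iff.2 (sub_ne_zero.2 hyx)
    positivity

variable [InnerProductSpace ℝ E]

lemma inner_sq_sub_mul_norm_sq_neg {q : ℝ} (hq : 0 < q) (a : E) {c : E} (hc : c ≠ 0) :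
    ⟪a, c⟫ ^ 2 - (q + ‖a‖ ^ 2) * ‖c‖ ^ 2 < 0 := by
  have hcs : ⟪a, c⟫ ^ 2 ≤ ‖a‖ ^ 2 * ‖c‖ ^ 2 := by
    rw [← mul_pow, ← sq_abs]
    exact pow_le_pow_left₀ (abs_nonneg _) (abs_real_inner_le_norm a c) 2
  have hc2 : 0 < ‖c‖ ^ 2 := by positivity
  nlinarith

lemma inner_cramer_solution {q Δ FV Fh l1 l2 : ℝ} (a c : E)
    (hΔ : Δ = ⟪a, c⟫ ^ 2 - (q + ‖a‖ ^ 2) * ‖c‖ ^ 2) (hΔ0 : Δ ≠ 0)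
    (hl1 : l1 = Δ⁻¹ * (⟪a, c⟫ * Fh - ‖c‖ ^ 2 * FV))
    (hl2 : l2 = Δ⁻¹ * ((q + ‖a‖ ^ 2) * Fh - ⟪a, c⟫ * FV)) :
    ⟪a, -(l1 • a) + l2 • c⟫ = -FV + q * l1 ∧ ⟪c, -(l1 • a) + l2 • c⟫ = -Fh := by
  have h1 : l1 * Δ = ⟪a, c⟫ * Fh - ‖c‖ ^ 2 * FV := by rw [hl1]; field_simp
  have h2 : l2 * Δ = (q + ‖a‖ ^ 2) * Fh - ⟪a, c⟫ * FV := by rw [hl2]; field_simp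
  simp only [inner_add_right, inner_neg_right, real_inner_smul_right,
    real_inner_self_eq_norm_sq, real_inner_comm a c]
  constructor
  · refine mul_right_cancel₀ hΔ0 ?_
    linear_combination (-(‖a‖ ^ 2) - q) * h1 + ⟪a, c⟫ * h2 + FV * hΔ
  · refine mul_right_cancel₀ hΔ0 ?_
    linear_combination (-⟪a, c⟫) * h1 + ‖c‖ ^ 2 * h2 + Fh * hΔ

lemma inner_sub_add_mul_sub_nonneg_of_kkt {a c u : E} {p FV Fh l1 l2 δ' δ : ℝ}
    (hl1 : 0 ≤ l1) (hl2 : 0 ≤ l2) (hδ' : p * δ' = l1)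
    (ha : ⟪a, -(l1 • a) + l2 • c⟫ = -FV + δ') (hc : ⟪c, -(l1 • a) + l2 • c⟫ = -Fh)
    (hua : ⟪a, u⟫ ≤ -FV + δ) (huc : ⟪c, u⟫ ≥ -Fh) :
    0 ≤ ⟪-(l1 • a) + l2 • c, u - (-(l1 • a) + l2 • c)⟫ + p * δ' * (δ - δ') := by
  have hexpand : ⟪-(l1 • a) + l2 • c, u - (-(l1 • a) + l2 • c)⟫ =
      -(l1 * (⟪a, u⟫ - ⟪a, -(l1 • a) + l2 • c⟫)) + l2 * (⟪c, u⟫ - ⟪c, -(l1 • a) + l2 • c⟫) := by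
    simp only [inner_add_left, inner_neg_left, real_inner_smul_left, inner_sub_right]
    ring
  rw [hexpand, ha, hc, hδ']
  linarith [mul_nonneg hl1 (sub_nonneg.2 hua), mul_nonneg hl2 (sub_nonneg.2 huc)]

lemma norm_sq_add_mul_sq_add_le_of_inner_nonneg {x y : E} {p s t : ℝ}
    (h : 0 ≤ ⟪x, y - x⟫ + p * s * (t - s)) :
    ‖x‖ ^ 2 + p * s ^ 2 + (‖y - x‖ ^ 2 + p * (t - s) ^ 2) ≤ ‖y‖ ^ 2 + p * t ^ 2 := by
  have hy : ‖y‖ ^ 2 = ‖x‖ ^ 2 + 2 * ⟪x, y - x⟫ + ‖y - x‖ ^ 2 := by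
    simpa only [add_sub_cancel] using norm_add_sq_real x (y - x)
  linarith

/-- closed-form KKT solution of the relaxed CLF-CBF QP when both
constraints are active: with `L = ⟪a,c⟫`, `Δ = L² - (p⁻¹ + ‖a‖²)‖c‖² < 0`,
multipliers `λ₁ = Δ⁻¹(L F_h - ‖c‖² F_V) ≥ 0`, `λ₂ = Δ⁻¹((p⁻¹ + ‖a‖²)F_h - L F_V) ≥ 0`,
the pair `u* = -λ₁ a + λ₂ c`, `δ* = p⁻¹ λ₁` is the unique minimizer of
`½(‖u‖² + pδ²)` over `{(u,δ) : ⟪a,u⟫ ≤ -F_V + δ ∧ ⟪c,u⟫ ≥ -F_h}`. -/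
theorem stmt_15 {m : ℕ}
    (p : ℝ) (hp : 0 < p)
    (a c : EuclideanSpace ℝ (Fin m)) (hc : c ≠ 0)
    (FV Fh : ℝ)
    (L Δ l1 l2 : ℝ)
    (hL : L = ⟪a, c⟫)
    (hΔ : Δ = L ^ 2 - (p⁻¹ + ‖a‖ ^ 2) * ‖c‖ ^ 2)
    (hl1 : l1 = Δ⁻¹ * (L * Fh - ‖c‖ ^ 2 * FV))
    (hl2 : l2 = Δ⁻¹ * ((p⁻¹ + ‖a‖ ^ 2) * Fh - L * FV))
    (hl1nn : 0 ≤ l1) (hl2nn : 0 ≤ l2) :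
    let uStar : EuclideanSpace ℝ (Fin m) := -(l1 • a) + l2 • c
    let δStar : ℝ := p⁻¹ * l1
    (⟪a, uStar⟫ ≤ -FV + δStar ∧ ⟪c, uStar⟫ ≥ -Fh) ∧
    ∀ (u : EuclideanSpace ℝ (Fin m)) (δ : ℝ),
      ⟪a, u⟫ ≤ -FV + δ → ⟪c, u⟫ ≥ -Fh →
      (1 : ℝ) / 2 * (‖uStar‖ ^ 2 + p * δStar ^ 2) ≤
        (1 : ℝ) / 2 * (‖u‖ ^ 2 + p * δ ^ 2) ∧
      ((u, δ) ≠ (uStar, δStar) →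
        (1 : ℝ) / 2 * (‖uStar‖ ^ 2 + p * δStar ^ 2) <
          (1 : ℝ) / 2 * (‖u‖ ^ 2 + p * δ ^ 2)) := by
  intro uStar δStar
  subst hL
  have hΔ0 : Δ ≠ 0 := hΔ ▸ (inner_sq_sub_mul_norm_sq_neg (inv_pos.2 hp) a hc).ne
  obtain ⟨ha, hc⟩ := inner_cramer_solution a c hΔ hΔ0 hl1 hl2
  have hδ : p * δStar = l1 := mul_inv_cancel_left₀ hp.ne' l1
  refine ⟨⟨ha.le, hc.ge⟩, fun u δ hua huc => ?_⟩
  have hgap := norm_sq_add_mul_sq_add_le_of_inner_nonneg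
    (inner_sub_add_mul_sub_nonneg_of_kkt hl1nn hl2nn hδ ha hc hua huc)
  have hrest : 0 ≤ ‖u - uStar‖ ^ 2 + p * (δ - δStar) ^ 2 := by positivity
  exact ⟨by linarith, fun hne => by linarith [norm_sq_sub_add_mul_sq_sub_pos hp hne]⟩
end

section
/- (CLF Backstepping.) Let η̄ ∈ ℝᵖ, let V : ℝᵖ → ℝ be continuously differentiable with V(η̄) = 0 and V(η) > 0 for all η ≠ η̄, let f̄ : ℝᵖ → ℝᵖ and Ḡ : ℝᵖ → ℝ^{p×r} be maps, let γ₀ : ℝ_{≥0} → ℝ_{≥0} be a class-K function, and let k : ℝᵖ → ℝʳ be continuously differentiable with ⟨∇V(η), f̄(η) + Ḡ(η)k(η)⟩ ≤ −γ₀(V(η)) for all η ∈ ℝᵖ. Let f₁ : ℝᵖ × ℝʳ → ℝʳ be any map, and let G₁ : ℝᵖ × ℝʳ → ℝ^{r×m} be such that for every (η, z) the map w ↦ G₁(η,z)ᵀw is injective on ℝʳ (full row rank). For β > 0 define V₁(η, z) = V(η) + (1/(2β))‖z − k(η)‖². Then for every class-K function γ₁ with γ₁(s) < γ₀(s) for all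 s > 0, and for every (η, z) ∈ ℝᵖ × ℝʳ with (η, z) ≠ (η̄, k(η̄)), one has inf_{υ ∈ ℝᵐ} ⟨∇V₁(η,z), (f̄(η) + Ḡ(η)z, f₁(η,z) + G₁(η,z)υ)⟩ < −γ₁(V₁(η,z)). -/
open scoped RealInnerProductSpace

/-!
Along `z = k η` the cross term of `∇V₁` vanishes and `V₁ = V`, so the virtual controller gives
`V̇₁ ≤ -γ₀(V) < -γ₁(V₁)` whatever `υ` is. Off that set, `υ` enters `V̇₁` only through
`⟪z - k η, G₁ υ⟫ / β = ⟪G₁ᵀ (z - k η), υ⟫ / β`, which is unbounded below since `G₁ᵀ` is injective.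
-/

section Backstepping

variable {E F : Type*} [NormedAddCommGroup E] [InnerProductSpace ℝ E]
  [NormedAddCommGroup F] [InnerProductSpace ℝ F]

noncomputable def backstepLyapunov (V : E → ℝ) (k : E → F) (β : ℝ) (w : WithLp 2 (E × F)) : ℝ :=
  V w.fst + 1 / (2 * β) * ‖w.snd - k w.fst‖ ^ 2

theorem inner_gradient_backstepLyapunov [CompleteSpace E] [CompleteSpace F] {V : E → ℝ}
    {k : E → F} {η : E} (hV : DifferentiableAt ℝ V η) (hk : DifferentiableAt ℝ k η)
    (β : ℝ) (z : F) (a : E) (b : F) :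
    ⟪gradient (backstepLyapunov V k β) (WithLp.toLp 2 (η, z)), WithLp.toLp 2 (a, b)⟫ =
      ⟪gradient V η, a⟫ + 1 / β * ⟪z - k η, b - fderiv ℝ k η a⟫ := by
  have hfst := (WithLp.fstL 2 ℝ E F).hasFDerivAt (x := WithLp.toLp 2 (η, z))
  have hsnd := (WithLp.sndL 2 ℝ E F).hasFDerivAt (x := WithLp.toLp 2 (η, z))
  have h : HasFDerivAt (backstepLyapunov V k β) _ _ :=
    (hV.hasFDerivAt.comp _ hfst).add
      ((hsnd.sub (hk.hasFDerivAt.comp _ hfst)).norm_sq.const_mul (1 / (2 * β)))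
  rw [inner_gradient_left, h.fderiv, inner_gradient_left]
  simp only [WithLp.fstL_apply, WithLp.sndL_apply, WithLp.toLp_fst, WithLp.toLp_snd,
    Pi.sub_apply, Function.comp_apply, add_apply, smul_apply, sub_apply,
    ContinuousLinearMap.comp_apply, coe_innerSL_apply, nsmul_eq_mul, smul_eq_mul, inner_sub_left, inner_sub_right]
  ring

theorem exists_inner_apply_lt {H : Type*} [NormedAddCommGroup H] [InnerProductSpace ℝ H]
    [CompleteSpace H] [CompleteSpace F] (G : H →L[ℝ] F) (hG : Function.Injective G.adjoint)
    {x : F} (hx : x ≠ 0) (M : ℝ) : ∃ υ, ⟪x, G υ⟫ < M := by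
  set q := G.adjoint x
  have hq : q ≠ 0 := fun h => hx (hG (h.trans (map_zero _).symm))
  have hq2 : 0 < ‖q‖ ^ 2 := by positivity
  refine ⟨((M - 1) / ‖q‖ ^ 2) • q, ?_⟩
  rw [← ContinuousLinearMap.adjoint_inner_left, real_inner_smul_right, real_inner_self_eq_norm_sq,
    div_mul_cancel₀ _ hq2.ne']
  linarith

end Backstepping

theorem stmt_16_general {p r m : ℕ}
    (ηbar : EuclideanSpace ℝ (Fin p))
    (V : EuclideanSpace ℝ (Fin p) → ℝ)
    (hV : ContDiff ℝ 1 V)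
    (hVpos : ∀ η, η ≠ ηbar → 0 < V η)
    (fb : EuclideanSpace ℝ (Fin p) → EuclideanSpace ℝ (Fin p))
    (Gb : EuclideanSpace ℝ (Fin p) →
      (EuclideanSpace ℝ (Fin r) →L[ℝ] EuclideanSpace ℝ (Fin p)))
    (γ₀ : ℝ → ℝ)
    (k : EuclideanSpace ℝ (Fin p) → EuclideanSpace ℝ (Fin r))
    (hk : ContDiff ℝ 1 k)
    (hCLF : ∀ η, ⟪gradient V η, fb η + Gb η (k η)⟫ ≤ -γ₀ (V η))
    (f₁ : EuclideanSpace ℝ (Fin p) × EuclideanSpace ℝ (Fin r) →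
      EuclideanSpace ℝ (Fin r))
    (G₁ : EuclideanSpace ℝ (Fin p) × EuclideanSpace ℝ (Fin r) →
      (EuclideanSpace ℝ (Fin m) →L[ℝ] EuclideanSpace ℝ (Fin r)))
    (hG₁ : ∀ w, Function.Injective ((G₁ w).adjoint))
    (β : ℝ) (hβ : 0 < β)
    (γ₁ : ℝ → ℝ)
    (hγ₁lt : ∀ s : ℝ, 0 < s → γ₁ s < γ₀ s) :
    let e := WithLp.equiv 2
      (EuclideanSpace ℝ (Fin p) × EuclideanSpace ℝ (Fin r))
    let V₁ : WithLp 2 (EuclideanSpace ℝ (Fin p) × EuclideanSpace ℝ (Fin r)) → ℝ :=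
      fun w => V (e w).1 + 1 / (2 * β) * ‖(e w).2 - k (e w).1‖ ^ 2
    ∀ (η : EuclideanSpace ℝ (Fin p)) (z : EuclideanSpace ℝ (Fin r)),
      (η, z) ≠ (ηbar, k ηbar) →
      ∃ υ : EuclideanSpace ℝ (Fin m),
        ⟪gradient V₁ (e.symm (η, z)),
            e.symm (fb η + Gb η z, f₁ (η, z) + G₁ (η, z) υ)⟫ <
          -γ₁ (V₁ (e.symm (η, z))) := by
  intro e V₁ η z hne
  change ∃ υ, ⟪gradient (backstepLyapunov V k β) (WithLp.toLp 2 (η, z)),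
      WithLp.toLp 2 (fb η + Gb η z, f₁ (η, z) + G₁ (η, z) υ)⟫ <
    -γ₁ (backstepLyapunov V k β (WithLp.toLp 2 (η, z)))
  simp only [inner_gradient_backstepLyapunov (hV.differentiable one_ne_zero η)
    (hk.differentiable one_ne_zero η)]
  by_cases hz : z = k η
  · have hη : η ≠ ηbar := by
      rintro rfl
      exact hne (by rw [hz])
    have hV₁ : backstepLyapunov V k β (WithLp.toLp 2 (η, z)) = V η := by
      simp [backstepLyapunov, hz]
    refine ⟨0, ?_⟩
    rw [hV₁, hz, sub_self, inner_zero_left, mul_zero, add_zero]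
    linarith [hCLF η, hγ₁lt _ (hVpos η hη)]
  · set S := ⟪gradient V η, fb η + Gb η z⟫
    set I := ⟪z - k η, f₁ (η, z) - fderiv ℝ k η (fb η + Gb η z)⟫
    set c := γ₁ (backstepLyapunov V k β (WithLp.toLp 2 (η, z)))
    obtain ⟨υ, hυ⟩ := exists_inner_apply_lt (G₁ (η, z)) (hG₁ _) (sub_ne_zero.mpr hz)
      (β * (-c - S) - I)
    refine ⟨υ, ?_⟩
    have hdiv : (I + ⟪z - k η, G₁ (η, z) υ⟫) / β < -c - S :=
      (div_lt_iff₀ hβ).2 (by linarith)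
    rw [add_sub_right_comm, inner_add_right, one_div_mul_eq_div]
    linarith

/-- CLF backstepping: if `V` is a positive-definite CLF for the
top subsystem `η̇ = f̄(η) + Ḡ(η)z` certified by a C¹ virtual controller `k`
with class-K rate `γ₀`, then the backstepped function
`V₁(η,z) = V(η) + (1/(2β))‖z - k(η)‖²` satisfies the strict CLF infimum
condition for the cascaded system with any class-K rate `γ₁ < γ₀` away from
the point `(η̄, k(η̄))`. -/
theorem stmt_16 {p r m : ℕ}
    (ηbar : EuclideanSpace ℝ (Fin p))
    (V : EuclideanSpace ℝ (Fin p) → ℝ)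
    (hV : ContDiff ℝ 1 V)
    (hV0 : V ηbar = 0)
    (hVpos : ∀ η, η ≠ ηbar → 0 < V η)
    (fb : EuclideanSpace ℝ (Fin p) → EuclideanSpace ℝ (Fin p))
    (Gb : EuclideanSpace ℝ (Fin p) →
      (EuclideanSpace ℝ (Fin r) →L[ℝ] EuclideanSpace ℝ (Fin p)))
    (γ₀ : ℝ → ℝ)
    (hγ₀cont : ContinuousOn γ₀ (Set.Ici 0))
    (hγ₀mono : StrictMonoOn γ₀ (Set.Ici 0))
    (hγ₀0 : γ₀ 0 = 0)
    (hγ₀nonneg : ∀ s, 0 ≤ s → 0 ≤ γ₀ s)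
    (k : EuclideanSpace ℝ (Fin p) → EuclideanSpace ℝ (Fin r))
    (hk : ContDiff ℝ 1 k)
    (hCLF : ∀ η, ⟪gradient V η, fb η + Gb η (k η)⟫ ≤ -γ₀ (V η))
    (f₁ : EuclideanSpace ℝ (Fin p) × EuclideanSpace ℝ (Fin r) →
      EuclideanSpace ℝ (Fin r))
    (G₁ : EuclideanSpace ℝ (Fin p) × EuclideanSpace ℝ (Fin r) →
      (EuclideanSpace ℝ (Fin m) →L[ℝ] EuclideanSpace ℝ (Fin r)))
    (hG₁ : ∀ w, Function.Injective ((G₁ w).adjoint))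
    (β : ℝ) (hβ : 0 < β)
    (γ₁ : ℝ → ℝ)
    (hγ₁cont : ContinuousOn γ₁ (Set.Ici 0))
    (hγ₁mono : StrictMonoOn γ₁ (Set.Ici 0))
    (hγ₁0 : γ₁ 0 = 0)
    (hγ₁nonneg : ∀ s, 0 ≤ s → 0 ≤ γ₁ s)
    (hγ₁lt : ∀ s : ℝ, 0 < s → γ₁ s < γ₀ s) :
    let e := WithLp.equiv 2
      (EuclideanSpace ℝ (Fin p) × EuclideanSpace ℝ (Fin r))
    let V₁ : WithLp 2 (EuclideanSpace ℝ (Fin p) × EuclideanSpace ℝ (Fin r)) → ℝ :=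
      fun w => V (e w).1 + 1 / (2 * β) * ‖(e w).2 - k (e w).1‖ ^ 2
    ∀ (η : EuclideanSpace ℝ (Fin p)) (z : EuclideanSpace ℝ (Fin r)),
      (η, z) ≠ (ηbar, k ηbar) →
      ∃ υ : EuclideanSpace ℝ (Fin m),
        ⟪gradient V₁ (e.symm (η, z)),
            e.symm (fb η + Gb η z, f₁ (η, z) + G₁ (η, z) υ)⟫ <
          -γ₁ (V₁ (e.symm (η, z))) :=
  stmt_16_general ηbar V hV hVpos fb Gb γ₀ k hk hCLF f₁ G₁ hG₁ β hβ γ₁ hγ₁lt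
end

section
/- (CBF Backstepping.) Let h : ℝᵖ → ℝ be continuously differentiable, let f̄ : ℝᵖ → ℝᵖ and Ḡ : ℝᵖ → ℝ^{p×r} be maps, let α₀ : ℝ → ℝ be an extended class-K∞ function, and let k : ℝᵖ → ℝʳ be continuously differentiable with ⟨∇h(η), f̄(η) + Ḡ(η)k(η)⟩ > −α₀(h(η)) for all η ∈ ℝᵖ. Let f₁ : ℝᵖ × ℝʳ → ℝʳ be any map, and let G₁ : ℝᵖ × ℝʳ → ℝ^{r×m} be such that for every (η, z) the map w ↦ G₁(η,z)ᵀw is injective on ℝʳ (full row rank). For β > 0 define h₁(η, z) = h(η) − (1/(2β))‖z − k(η)‖². Then for every extended class-K∞ function α₁ with α₁(s) ≥ α₀(s) for all s ∈ ℝ, and for every (η, z) ∈ ℝᵖ × ℝʳ, one has sup_{υ ∈ ℝᵐ} ⟨∇h₁(η,z), (f̄(η) + Ḡ(η)z, f₁(η,z) + G₁(η,z)υ)⟩ > −α₁(h₁(η,z)). -/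
open scoped RealInnerProductSpace

/-!
Along the cascaded vector field, the Lie derivative of `h₁ = h - ‖z - k η‖² / (2β)` is
`⟪∇h η, f̄ η + Ḡ η z⟫ - β⁻¹ ⟪z - k η, f₁ + G₁ υ - Dk η (f̄ η + Ḡ η z)⟫`.
On the set `z = k η` the second term vanishes, `h₁ = h`, and the hypothesis on `k` together
with `α₀ ≤ α₁` gives the inequality for any input. Off that set, `G₁` is surjective (its adjoint
is injective), so `υ` can make the second term an arbitrary real number.
-/

theorem ContinuousLinearMap.surjective_of_injective_adjoint {𝕜 E F : Type*} [RCLike 𝕜]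
    [NormedAddCommGroup E] [InnerProductSpace 𝕜 E] [CompleteSpace E]
    [NormedAddCommGroup F] [InnerProductSpace 𝕜 F] [CompleteSpace F] [FiniteDimensional 𝕜 F]
    {T : E →L[𝕜] F} (hT : Function.Injective T.adjoint) : Function.Surjective T := by
  refine LinearMap.range_eq_top.mp (Submodule.orthogonal_eq_bot_iff.mp ?_)
  rw [T.orthogonal_range]
  exact LinearMap.ker_eq_bot.mpr hT

theorem exists_inner_eq_of_ne_zero {F : Type*} [NormedAddCommGroup F] [InnerProductSpace ℝ F]
    {u : F} (hu : u ≠ 0) (t : ℝ) : ∃ v, ⟪u, v⟫ = t := by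
  refine ⟨(t / ‖u‖ ^ 2) • u, ?_⟩
  have : ‖u‖ ≠ 0 := norm_ne_zero_iff.mpr hu
  rw [real_inner_smul_right, real_inner_self_eq_norm_sq]
  field_simp

theorem inner_gradient_sub_mul_norm_sub_sq {E F : Type*}
    [NormedAddCommGroup E] [InnerProductSpace ℝ E] [CompleteSpace E]
    [NormedAddCommGroup F] [InnerProductSpace ℝ F] [CompleteSpace F]
    {h : E → ℝ} {k : E → F} {η : E} (hh : DifferentiableAt ℝ h η)
    (hk : DifferentiableAt ℝ k η) (c : ℝ) (z : F) (A : E) (B : F) :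
    ⟪gradient (fun w : WithLp 2 (E × F) => h w.fst - c * ‖w.snd - k w.fst‖ ^ 2)
        (WithLp.toLp 2 (η, z)), WithLp.toLp 2 (A, B)⟫ =
      ⟪gradient h η, A⟫ - 2 * c * ⟪z - k η, B - fderiv ℝ k η A⟫ := by
  have hd : HasFDerivAt (fun w : WithLp 2 (E × F) => h w.fst - c * ‖w.snd - k w.fst‖ ^ 2) _
      (WithLp.toLp 2 (η, z)) :=
    (hh.hasFDerivAt.comp _ (WithLp.fstL 2 ℝ E F).hasFDerivAt).sub
      ((((WithLp.sndL 2 ℝ E F).hasFDerivAt.sub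
        (hk.hasFDerivAt.comp _ (WithLp.fstL 2 ℝ E F).hasFDerivAt)).norm_sq).const_mul c)
  rw [inner_gradient_left, inner_gradient_left, hd.fderiv]
  simp only [sub_apply, smul_apply, ContinuousLinearMap.comp_apply, WithLp.fstL_apply,
    WithLp.sndL_apply, WithLp.toLp_fst, WithLp.toLp_snd, Pi.sub_apply, Function.comp_apply, innerSL_apply_apply, nsmul_eq_mul,
    smul_eq_mul, map_sub, inner_sub_left, inner_sub_right]
  ring

theorem stmt_17_general {p r m : ℕ}
    (h : EuclideanSpace ℝ (Fin p) → ℝ)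
    (hh : ContDiff ℝ 1 h)
    (fb : EuclideanSpace ℝ (Fin p) → EuclideanSpace ℝ (Fin p))
    (Gb : EuclideanSpace ℝ (Fin p) →
      (EuclideanSpace ℝ (Fin r) →L[ℝ] EuclideanSpace ℝ (Fin p)))
    (α₀ : ℝ → ℝ)
    (k : EuclideanSpace ℝ (Fin p) → EuclideanSpace ℝ (Fin r))
    (hk : ContDiff ℝ 1 k)
    (hCBF : ∀ η, ⟪gradient h η, fb η + Gb η (k η)⟫ > -α₀ (h η))
    (f₁ : EuclideanSpace ℝ (Fin p) × EuclideanSpace ℝ (Fin r) →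
      EuclideanSpace ℝ (Fin r))
    (G₁ : EuclideanSpace ℝ (Fin p) × EuclideanSpace ℝ (Fin r) →
      (EuclideanSpace ℝ (Fin m) →L[ℝ] EuclideanSpace ℝ (Fin r)))
    (hG₁ : ∀ w, Function.Injective ((G₁ w).adjoint))
    (β : ℝ) (hβ : 0 < β)
    (α₁ : ℝ → ℝ)
    (hα₁ge : ∀ s : ℝ, α₀ s ≤ α₁ s) :
    let e := WithLp.equiv 2
      (EuclideanSpace ℝ (Fin p) × EuclideanSpace ℝ (Fin r))
    let h₁ : WithLp 2 (EuclideanSpace ℝ (Fin p) × EuclideanSpace ℝ (Fin r)) → ℝ :=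
      fun w => h (e w).1 - 1 / (2 * β) * ‖(e w).2 - k (e w).1‖ ^ 2
    ∀ (η : EuclideanSpace ℝ (Fin p)) (z : EuclideanSpace ℝ (Fin r)),
      ∃ υ : EuclideanSpace ℝ (Fin m),
        ⟪gradient h₁ (e.symm (η, z)),
            e.symm (fb η + Gb η z, f₁ (η, z) + G₁ (η, z) υ)⟫ >
          -α₁ (h₁ (e.symm (η, z))) := by
  intro e h₁ η z
  set A := fb η + Gb η z with hA
  have hlie : ∀ υ, ⟪gradient h₁ (e.symm (η, z)), e.symm (A, f₁ (η, z) + G₁ (η, z) υ)⟫ =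
      ⟪gradient h η, A⟫ -
        2 * (1 / (2 * β)) * ⟪z - k η, f₁ (η, z) + G₁ (η, z) υ - fderiv ℝ k η A⟫ :=
    fun _ => inner_gradient_sub_mul_norm_sub_sq (hh.differentiable one_ne_zero η)
      (hk.differentiable one_ne_zero η) _ z A _
  have hh₁ : h₁ (e.symm (η, z)) = h η - 1 / (2 * β) * ‖z - k η‖ ^ 2 := rfl
  by_cases hz : z = k η
  · refine ⟨0, ?_⟩
    rw [hlie, hh₁, hA, hz, sub_self, inner_zero_left, norm_zero,
      zero_pow two_ne_zero, mul_zero, mul_zero, sub_zero, sub_zero]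
    linarith [hCBF η, hα₁ge (h η)]
  · obtain ⟨v, hv⟩ := exists_inner_eq_of_ne_zero (sub_ne_zero.mpr hz)
      (β * (⟪gradient h η, A⟫ + α₁ (h₁ (e.symm (η, z))) - 1))
    obtain ⟨υ, hυ⟩ := (G₁ (η, z)).surjective_of_injective_adjoint (hG₁ (η, z))
      (v + fderiv ℝ k η A - f₁ (η, z))
    refine ⟨υ, ?_⟩
    rw [hlie, hυ, add_sub_cancel, add_sub_cancel_right, hv]
    field_simp
    linarith

/-- CBF backstepping: if `h` is a CBF for the top subsystem
`η̇ = f̄(η) + Ḡ(η)z` certified strictly by a C¹ virtual controller `k` with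
extended class-K∞ rate `α₀`, then the backstepped function
`h₁(η,z) = h(η) - (1/(2β))‖z - k(η)‖²` satisfies the strict CBF supremum
condition for the cascaded system with any extended class-K∞ rate `α₁ ≥ α₀`. -/
theorem stmt_17 {p r m : ℕ}
    (h : EuclideanSpace ℝ (Fin p) → ℝ)
    (hh : ContDiff ℝ 1 h)
    (fb : EuclideanSpace ℝ (Fin p) → EuclideanSpace ℝ (Fin p))
    (Gb : EuclideanSpace ℝ (Fin p) →
      (EuclideanSpace ℝ (Fin r) →L[ℝ] EuclideanSpace ℝ (Fin p)))
    (α₀ : ℝ → ℝ)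
    (hα₀cont : Continuous α₀)
    (hα₀mono : StrictMono α₀)
    (hα₀0 : α₀ 0 = 0)
    (hα₀top : Filter.Tendsto α₀ Filter.atTop Filter.atTop)
    (hα₀bot : Filter.Tendsto α₀ Filter.atBot Filter.atBot)
    (k : EuclideanSpace ℝ (Fin p) → EuclideanSpace ℝ (Fin r))
    (hk : ContDiff ℝ 1 k)
    (hCBF : ∀ η, ⟪gradient h η, fb η + Gb η (k η)⟫ > -α₀ (h η))
    (f₁ : EuclideanSpace ℝ (Fin p) × EuclideanSpace ℝ (Fin r) →
      EuclideanSpace ℝ (Fin r))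
    (G₁ : EuclideanSpace ℝ (Fin p) × EuclideanSpace ℝ (Fin r) →
      (EuclideanSpace ℝ (Fin m) →L[ℝ] EuclideanSpace ℝ (Fin r)))
    (hG₁ : ∀ w, Function.Injective ((G₁ w).adjoint))
    (β : ℝ) (hβ : 0 < β)
    (α₁ : ℝ → ℝ)
    (hα₁cont : Continuous α₁)
    (hα₁mono : StrictMono α₁)
    (hα₁0 : α₁ 0 = 0)
    (hα₁top : Filter.Tendsto α₁ Filter.atTop Filter.atTop)
    (hα₁bot : Filter.Tendsto α₁ Filter.atBot Filter.atBot)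
    (hα₁ge : ∀ s : ℝ, α₀ s ≤ α₁ s) :
    let e := WithLp.equiv 2
      (EuclideanSpace ℝ (Fin p) × EuclideanSpace ℝ (Fin r))
    let h₁ : WithLp 2 (EuclideanSpace ℝ (Fin p) × EuclideanSpace ℝ (Fin r)) → ℝ :=
      fun w => h (e w).1 - 1 / (2 * β) * ‖(e w).2 - k (e w).1‖ ^ 2
    ∀ (η : EuclideanSpace ℝ (Fin p)) (z : EuclideanSpace ℝ (Fin r)),
      ∃ υ : EuclideanSpace ℝ (Fin m),
        ⟪gradient h₁ (e.symm (η, z)),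
            e.symm (fb η + Gb η z, f₁ (η, z) + G₁ (η, z) υ)⟫ >
          -α₁ (h₁ (e.symm (η, z))) :=
  stmt_17_general h hh fb Gb α₀ k hk hCBF f₁ G₁ hG₁ β hβ α₁ hα₁ge
end

section
/- Let V, h : ℝᵖ → ℝ and k : ℝᵖ → ℝʳ be continuously differentiable, let β_V, β_h > 0, and define on ℝᵖ × ℝʳ the functions V₁(η, z) = V(η) + (1/(2β_V))‖z − k(η)‖² and h₁(η, z) = h(η) − (1/(2β_h))‖z − k(η)‖². Let G₁ : ℝᵖ × ℝʳ → ℝ^{r×m} be any map and let Ḡ₁(η,z)υ = (0, G₁(η,z)υ) ∈ ℝᵖ × ℝʳ. Then for all (η, z) and all υ ∈ ℝᵐ: (i) ⟨∇h₁(η,z), Ḡ₁(η,z)υ⟩ = −(β_V/β_h)·⟨∇V₁(η,z), Ḡ₁(η,z)υ⟩; and consequently (ii) for any F : ℝᵖ × ℝʳ → ℝᵖ × ℝʳ and reals γ̃, α̃, the pair of conditions ⟨∇V₁, F + Ḡ₁υ⟩ ≤ −γ̃ and ⟨∇h₁, F + Ḡ₁υ⟩ ≥ −α̃ (evaluated at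 (η,z)) holds if and only if ⟨∇V₁(η,z), Ḡ₁(η,z)υ⟩ ≤ min{ −(⟨∇V₁(η,z), F(η,z)⟩ + γ̃), (β_h/β_V)·(⟨∇h₁(η,z), F(η,z)⟩ + α̃) }. -/
open scoped RealInnerProductSpace

/-!
Both `V₁` and `h₁` depend on `z` only through the common term `‖z - k η‖²`, with coefficients
`1/(2β_V)` and `-1/(2β_h)`. An input direction `Ḡ₁ υ = (0, G₁ υ)` moves only `z`, so both Lie
derivatives along it are multiples of `⟪z - k η, G₁ υ⟫`, namely by `1/β_V` and `-1/β_h`.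
Part (ii) is then linear arithmetic, after dividing by the positive ratio `β_V/β_h`.
-/

theorem inner_gradient_eq_of_hasLineDerivAt {E : Type*} [NormedAddCommGroup E]
    [InnerProductSpace ℝ E] [CompleteSpace E] {f : E → ℝ} {x v : E} {f' : ℝ}
    (hf : DifferentiableAt ℝ f x) (hv : HasLineDerivAt ℝ f f' x v) :
    ⟪gradient f x, v⟫ = f' := by
  rw [← hf.hasGradientAt.fderiv_apply, ← hf.lineDeriv_eq_fderiv, hv.lineDeriv]

section

variable {E F : Type*} [NormedAddCommGroup E] [InnerProductSpace ℝ E]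
  [NormedAddCommGroup F] [InnerProductSpace ℝ F]

def backstep (φ : E → ℝ) (k : E → F) (c : ℝ) : WithLp 2 (E × F) → ℝ :=
  fun w => φ (WithLp.equiv 2 (E × F) w).1 +
    c * ‖(WithLp.equiv 2 (E × F) w).2 - k (WithLp.equiv 2 (E × F) w).1‖ ^ 2

theorem differentiableAt_backstep {φ : E → ℝ} {k : E → F} (c : ℝ) {η : E} (z : F)
    (hφ : DifferentiableAt ℝ φ η) (hk : DifferentiableAt ℝ k η) :
    DifferentiableAt ℝ (backstep φ k c) ((WithLp.equiv 2 (E × F)).symm (η, z)) := by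
  have he : DifferentiableAt ℝ (WithLp.equiv 2 (E × F)) ((WithLp.equiv 2 (E × F)).symm (η, z)) :=
    (WithLp.prodContinuousLinearEquiv 2 ℝ E F).differentiableAt
  exact (hφ.comp _ he.fst).add ((he.snd.sub (hk.comp _ he.fst)).norm_sq ℝ |>.const_mul c)

theorem backstep_add_smul_snd (φ : E → ℝ) (k : E → F) (c : ℝ) (η : E) (z u : F) (t : ℝ) :
    backstep φ k c
        ((WithLp.equiv 2 (E × F)).symm (η, z) + t • (WithLp.equiv 2 (E × F)).symm (0, u)) =
      φ η + c * ‖z - k η + t • u‖ ^ 2 := by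
  simp [backstep, sub_add_eq_add_sub]

theorem hasLineDerivAt_backstep_snd (φ : E → ℝ) (k : E → F) (c : ℝ) (η : E) (z u : F) :
    HasLineDerivAt ℝ (backstep φ k c) (2 * c * ⟪z - k η, u⟫)
      ((WithLp.equiv 2 (E × F)).symm (η, z)) ((WithLp.equiv 2 (E × F)).symm (0, u)) := by
  have h : HasDerivAt (fun t : ℝ => z - k η + t • u) u 0 := by
    simpa using ((hasDerivAt_id (0 : ℝ)).smul_const u).const_add (z - k η)
  have := (h.norm_sq.const_mul c).const_add (φ η)
  simp only [HasLineDerivAt, backstep_add_smul_snd]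
  convert this using 1
  simp only [zero_smul, add_zero]
  ring

theorem inner_gradient_backstep_snd [CompleteSpace E] [CompleteSpace F]
    {φ : E → ℝ} {k : E → F} {c : ℝ} {η : E} (hφ : DifferentiableAt ℝ φ η)
    (hk : DifferentiableAt ℝ k η) (z u : F) :
    ⟪gradient (backstep φ k c) ((WithLp.equiv 2 (E × F)).symm (η, z)),
      (WithLp.equiv 2 (E × F)).symm (0, u)⟫ = 2 * c * ⟪z - k η, u⟫ :=
  inner_gradient_eq_of_hasLineDerivAt (differentiableAt_backstep c z hφ hk)
    (hasLineDerivAt_backstep_snd φ k c η z u)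

end

theorem and_le_ge_iff_le_min {a b x γ α ρ : ℝ} (hρ : 0 < ρ) :
    (a + x ≤ -γ ∧ b + -ρ * x ≥ -α) ↔ x ≤ min (-(a + γ)) (ρ⁻¹ * (b + α)) := by
  rw [le_min_iff, le_inv_mul_iff₀ hρ]
  constructor <;> rintro ⟨h₁, h₂⟩ <;> constructor <;> linarith

/-- for the jointly backstepped CLF
`V₁(η,z) = V(η) + (1/(2β_V))‖z - k(η)‖²` and CBF
`h₁(η,z) = h(η) - (1/(2β_h))‖z - k(η)‖²`, the input-direction Lie derivatives
are negatively proportional: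
`⟪∇h₁, Ḡ₁υ⟫ = -(β_V/β_h)⟪∇V₁, Ḡ₁υ⟫`, and consequently the joint CLF-CBF
conditions reduce to a single linear inequality in the input `υ`. -/
theorem stmt_18 {p r m : ℕ}
    (V h : EuclideanSpace ℝ (Fin p) → ℝ)
    (hV : ContDiff ℝ 1 V) (hh : ContDiff ℝ 1 h)
    (k : EuclideanSpace ℝ (Fin p) → EuclideanSpace ℝ (Fin r))
    (hk : ContDiff ℝ 1 k)
    (βV βh : ℝ) (hβV : 0 < βV) (hβh : 0 < βh)
    (G₁ : EuclideanSpace ℝ (Fin p) × EuclideanSpace ℝ (Fin r) →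
      (EuclideanSpace ℝ (Fin m) →L[ℝ] EuclideanSpace ℝ (Fin r)))
    (F : EuclideanSpace ℝ (Fin p) × EuclideanSpace ℝ (Fin r) →
      EuclideanSpace ℝ (Fin p) × EuclideanSpace ℝ (Fin r)) :
    let e := WithLp.equiv 2
      (EuclideanSpace ℝ (Fin p) × EuclideanSpace ℝ (Fin r))
    let V₁ : WithLp 2 (EuclideanSpace ℝ (Fin p) × EuclideanSpace ℝ (Fin r)) → ℝ :=
      fun w => V (e w).1 + 1 / (2 * βV) * ‖(e w).2 - k (e w).1‖ ^ 2
    let h₁ : WithLp 2 (EuclideanSpace ℝ (Fin p) × EuclideanSpace ℝ (Fin r)) → ℝ :=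
      fun w => h (e w).1 - 1 / (2 * βh) * ‖(e w).2 - k (e w).1‖ ^ 2
    (∀ (η : EuclideanSpace ℝ (Fin p)) (z : EuclideanSpace ℝ (Fin r))
        (υ : EuclideanSpace ℝ (Fin m)),
      ⟪gradient h₁ (e.symm (η, z)), e.symm (0, G₁ (η, z) υ)⟫ =
        -(βV / βh) * ⟪gradient V₁ (e.symm (η, z)), e.symm (0, G₁ (η, z) υ)⟫) ∧
    (∀ (η : EuclideanSpace ℝ (Fin p)) (z : EuclideanSpace ℝ (Fin r))
        (υ : EuclideanSpace ℝ (Fin m)) (γt αt : ℝ),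
      (⟪gradient V₁ (e.symm (η, z)),
          e.symm (F (η, z)) + e.symm (0, G₁ (η, z) υ)⟫ ≤ -γt ∧
       ⟪gradient h₁ (e.symm (η, z)),
          e.symm (F (η, z)) + e.symm (0, G₁ (η, z) υ)⟫ ≥ -αt) ↔
      ⟪gradient V₁ (e.symm (η, z)), e.symm (0, G₁ (η, z) υ)⟫ ≤
        min (-(⟪gradient V₁ (e.symm (η, z)), e.symm (F (η, z))⟫ + γt))
          (βh / βV * (⟪gradient h₁ (e.symm (η, z)), e.symm (F (η, z))⟫ + αt))) := by
  intro e V₁ h₁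
  have hV₁ : V₁ = backstep V k (1 / (2 * βV)) := rfl
  have hh₁ : h₁ = backstep h k (-(1 / (2 * βh))) := by
    funext w
    simp only [backstep, neg_mul, ← sub_eq_add_neg]
    rfl
  have proportional : ∀ η z υ, ⟪gradient h₁ (e.symm (η, z)), e.symm (0, G₁ (η, z) υ)⟫ =
      -(βV / βh) * ⟪gradient V₁ (e.symm (η, z)), e.symm (0, G₁ (η, z) υ)⟫ := by
    intro η z υ
    have hVd := hV.differentiable one_ne_zero η
    have hhd := hh.differentiable one_ne_zero η
    have hkd := hk.differentiable one_ne_zero η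
    rw [hV₁, hh₁, inner_gradient_backstep_snd hVd hkd, inner_gradient_backstep_snd hhd hkd]
    field_simp
  refine ⟨proportional, fun η z υ γt αt => ?_⟩
  rw [inner_add_right, inner_add_right, proportional, ← inv_div βV βh]
  exact and_le_ge_iff_le_min (div_pos hβV hβh)
end
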